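/- Define f : ℂ⁴ → ℝ by f(z₁,z₂,z₃,z₄) = (3 + 6|z₁|² + 10|z₂|² + 5|z₃|² + 9|z₄|² + 12·|z₁z₄ − z₂z₃|²) / (1 + |z₁|² + |z₂|² + |z₃|² + |z₄|² + |z₁z₄ − z₂z₃|²). Then f is differentiable as a function on ℝ⁸ ≅ ℂ⁴, and its (real) Fréchet derivative vanishes at a point z if and only if z = 0; i.e. z = 0 is the unique critical point of f. -/

import Mathlib

/-!
The vector field `X = torusField` generates the scaling `zₖ ↦ e^{t wₖ} zₖ` (the complexified
circle action generated by `h`), under which each Plücker coordinate `P^J` is an eigenfunction of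
weight `h(δ_J) − h(δ₁₂)`. Hence the derivative of `f = h ∘ μ` along `X` is `2 Var(h)` for the
probability weights `|P^J|² / ∑ |P^J|²` on the vertices. As `P¹² = 1` and `h` takes distinct values
at the vertices, the variance vanishes only at `z = 0`, so no other point is critical; and `z = 0`
is critical because it is the global minimum `f = 3 = h(δ₁₂)`.
-/

/-- The composition `h ∘ μ` of the moment map of `G₄,₂` with the linear function
`h(x) = x₁ + 2x₂ + 4x₃ + 8x₄`, written in the Plücker chart `M₁₂ ≅ ℂ⁴`:
`f(z₁,z₂,z₃,z₄) = (3 + 6|z₁|² + 10|z₂|² + 5|z₃|² + 9|z₄|² + 12|z₁z₄ − z₂z₃|²) /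
(1 + |z₁|² + |z₂|² + |z₃|² + |z₄|² + |z₁z₄ − z₂z₃|²)`. -/
noncomputable def morseChart (z : Fin 4 → ℂ) : ℝ :=
  (3 + 6 * ‖z 0‖ ^ 2 + 10 * ‖z 1‖ ^ 2 + 5 * ‖z 2‖ ^ 2 + 9 * ‖z 3‖ ^ 2 +
      12 * ‖z 0 * z 3 - z 1 * z 2‖ ^ 2) /
    (1 + ‖z 0‖ ^ 2 + ‖z 1‖ ^ 2 + ‖z 2‖ ^ 2 + ‖z 3‖ ^ 2 + ‖z 0 * z 3 - z 1 * z 2‖ ^ 2)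

section LineDeriv

variable {E F : Type*} [NormedAddCommGroup E] [NormedSpace ℝ E] {x v : E}

theorem HasLineDerivAt.norm_sq_of_eq_smul [NormedAddCommGroup F] [InnerProductSpace ℝ F]
    {f : E → F} {u : ℝ} (hf : HasLineDerivAt ℝ f (u • f x) x v) :
    HasLineDerivAt ℝ (fun y => ‖f y‖ ^ 2) (2 * u * ‖f x‖ ^ 2) x v := by
  have h := HasDerivAt.norm_sq hf
  simp only [zero_smul, add_zero, real_inner_smul_right, real_inner_self_eq_norm_sq] at h
  rwa [← mul_assoc] at h

theorem HasLineDerivAt.fun_mul [NormedRing F] [NormedAlgebra ℝ F] {f g : E → F} {f' g' : F}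
    (hf : HasLineDerivAt ℝ f f' x v) (hg : HasLineDerivAt ℝ g g' x v) :
    HasLineDerivAt ℝ (fun y => f y * g y) (f' * g x + f x * g') x v := by
  have h := HasDerivAt.fun_mul hf hg
  simp only [zero_smul, add_zero] at h
  exact h

theorem HasLineDerivAt.fun_div {f g : E → ℝ} {f' g' : ℝ} (hf : HasLineDerivAt ℝ f f' x v)
    (hg : HasLineDerivAt ℝ g g' x v) (hx : g x ≠ 0) :
    HasLineDerivAt ℝ (fun y => f y / g y) ((f' * g x - f x * g') / g x ^ 2) x v := by
  have h := HasDerivAt.fun_div hf hg (by simpa using hx)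
  simp only [zero_smul, add_zero] at h
  exact h

end LineDeriv

noncomputable section

def plucker34 (z : Fin 4 → ℂ) : ℂ := z 0 * z 3 - z 1 * z 2

def morseNum (z : Fin 4 → ℂ) : ℝ :=
  3 + 6 * ‖z 0‖ ^ 2 + 10 * ‖z 1‖ ^ 2 + 5 * ‖z 2‖ ^ 2 + 9 * ‖z 3‖ ^ 2 + 12 * ‖plucker34 z‖ ^ 2

def morseDen (z : Fin 4 → ℂ) : ℝ :=
  1 + ‖z 0‖ ^ 2 + ‖z 1‖ ^ 2 + ‖z 2‖ ^ 2 + ‖z 3‖ ^ 2 + ‖plucker34 z‖ ^ 2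

/-- `D²` times the variance of `h` for the probability weights `|P^J|² / D` on the vertices `δ_J`,
where `D = morseDen`. -/
def morseVariance (z : Fin 4 → ℂ) : ℝ :=
  morseDen z * (9 + 36 * ‖z 0‖ ^ 2 + 100 * ‖z 1‖ ^ 2 + 25 * ‖z 2‖ ^ 2 + 81 * ‖z 3‖ ^ 2 +
    144 * ‖plucker34 z‖ ^ 2) - morseNum z ^ 2

/-- The weights `h(δ_J) − h(δ₁₂)` of the coordinates `z₁ = −P²³`, `z₂ = −P²⁴`, `z₃ = P¹³`,
`z₄ = P¹⁴`; the product `P³⁴ = z₁z₄ − z₂z₃` then has weight `3 + 6 = 7 + 2 = 9 = h(δ₃₄) − h(δ₁₂)`. -/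
def torusWeight : Fin 4 → ℝ := ![3, 7, 2, 6]

def torusField (z : Fin 4 → ℂ) : Fin 4 → ℂ := fun k => torusWeight k • z k

end

theorem morseChart_eq_div : morseChart = fun z => morseNum z / morseDen z := rfl

theorem morseDen_pos (z : Fin 4 → ℂ) : 0 < morseDen z := by
  unfold morseDen; positivity

theorem differentiable_morseChart : Differentiable ℝ morseChart := by
  have hz (k : Fin 4) : Differentiable ℝ fun z : Fin 4 → ℂ => ‖z k‖ ^ 2 :=
    (differentiable_apply (𝕜 := ℝ) (F' := fun _ => ℂ) k).norm_sq ℝ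
  have hp : Differentiable ℝ fun z => ‖plucker34 z‖ ^ 2 :=
    (show Differentiable ℝ plucker34 by unfold plucker34; fun_prop).norm_sq ℝ
  simp only [morseChart_eq_div, div_eq_mul_inv]
  refine Differentiable.mul ?_ (Differentiable.inv ?_ fun z => (morseDen_pos z).ne')
  · unfold morseNum; fun_prop
  · unfold morseDen; fun_prop

theorem three_le_morseChart (z : Fin 4 → ℂ) : 3 ≤ morseChart z := by
  rw [morseChart_eq_div, le_div_iff₀ (morseDen_pos z)]
  unfold morseNum morseDen
  linarith [sq_nonneg ‖z 0‖, sq_nonneg ‖z 1‖, sq_nonneg ‖z 2‖, sq_nonneg ‖z 3‖,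
    sq_nonneg ‖plucker34 z‖]

theorem isLocalMin_morseChart_zero : IsLocalMin morseChart 0 :=
  Filter.Eventually.of_forall fun z => by simpa [morseChart] using three_le_morseChart z

theorem hasLineDerivAt_apply_torusField (z : Fin 4 → ℂ) (k : Fin 4) :
    HasLineDerivAt ℝ (fun y : Fin 4 → ℂ => y k) (torusWeight k • z k) z (torusField z) :=
  (hasFDerivAt_apply (𝕜 := ℝ) k z).hasLineDerivAt _

theorem hasLineDerivAt_plucker34_torusField (z : Fin 4 → ℂ) :
    HasLineDerivAt ℝ plucker34 ((9 : ℝ) • plucker34 z) z (torusField z) := by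
  have c := hasLineDerivAt_apply_torusField z
  refine HasDerivAt.congr_deriv (((c 0).fun_mul (c 3)).sub ((c 1).fun_mul (c 2))) ?_
  simp only [plucker34, Complex.real_smul, torusWeight, Matrix.cons_val_zero,
    Matrix.cons_val_one, Matrix.cons_val]
  push_cast
  ring

theorem hasLineDerivAt_morseChart_torusField (z : Fin 4 → ℂ) :
    HasLineDerivAt ℝ morseChart (2 * morseVariance z / morseDen z ^ 2) z (torusField z) := by
  have h0 := (hasLineDerivAt_apply_torusField z 0).norm_sq_of_eq_smul
  have h1 := (hasLineDerivAt_apply_torusField z 1).norm_sq_of_eq_smul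
  have h2 := (hasLineDerivAt_apply_torusField z 2).norm_sq_of_eq_smul
  have h3 := (hasLineDerivAt_apply_torusField z 3).norm_sq_of_eq_smul
  have hp := (hasLineDerivAt_plucker34_torusField z).norm_sq_of_eq_smul
  have hN : HasLineDerivAt ℝ morseNum _ z (torusField z) :=
    (((((h0.const_mul 6).const_add 3).add (h1.const_mul 10)).add (h2.const_mul 5)).add
      (h3.const_mul 9)).add (hp.const_mul 12)
  have hD : HasLineDerivAt ℝ morseDen _ z (torusField z) :=
    ((((h0.const_add 1).add h1).add h2).add h3).add hp
  refine HasDerivAt.congr_deriv (hN.fun_div hD (morseDen_pos z).ne') ?_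
  simp only [morseVariance, morseNum, morseDen, torusWeight, Matrix.cons_val_zero,
    Matrix.cons_val_one, Matrix.cons_val]
  ring

/-- Lagrange's identity writes `morseVariance` as `∑_{J<K} |P^J|²|P^K|²(h(δ_J) − h(δ_K))²`;
the bound keeps the pairs containing `P¹² = 1`. -/
theorem morseVariance_ge (z : Fin 4 → ℂ) :
    9 * ‖z 0‖ ^ 2 + 49 * ‖z 1‖ ^ 2 + 4 * ‖z 2‖ ^ 2 + 36 * ‖z 3‖ ^ 2 + 81 * ‖plucker34 z‖ ^ 2 ≤
      morseVariance z := by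
  unfold morseVariance morseNum morseDen
  have h0 := sq_nonneg ‖z 0‖
  have h1 := sq_nonneg ‖z 1‖
  have h2 := sq_nonneg ‖z 2‖
  have h3 := sq_nonneg ‖z 3‖
  have hp := sq_nonneg ‖plucker34 z‖
  linarith [mul_nonneg h0 h1, mul_nonneg h0 h2, mul_nonneg h0 h3, mul_nonneg h0 hp,
    mul_nonneg h1 h2, mul_nonneg h1 h3, mul_nonneg h1 hp, mul_nonneg h2 h3, mul_nonneg h2 hp,
    mul_nonneg h3 hp]

theorem morseVariance_pos {z : Fin 4 → ℂ} (hz : z ≠ 0) : 0 < morseVariance z := by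
  obtain ⟨k, hzk⟩ := Function.ne_iff.mp hz
  have hk : 0 < ‖z k‖ ^ 2 := by positivity
  have := sq_nonneg ‖z 0‖
  have := sq_nonneg ‖z 1‖
  have := sq_nonneg ‖z 2‖
  have := sq_nonneg ‖z 3‖
  have := sq_nonneg ‖plucker34 z‖
  have := morseVariance_ge z
  fin_cases k <;> simp only [Fin.zero_eta, Fin.mk_one, Fin.reduceFinMk] at hk <;> linarith

/-- `f = h ∘ μ` is differentiable as a real function on `ℂ⁴ ≅ ℝ⁸`, and its
real Fréchet derivative vanishes at a point `z` if and only if `z = 0`; i.e. `z = 0` is the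
unique critical point of `f`. -/
theorem morseChart_differentiable_and_critical_iff_zero :
    Differentiable ℝ morseChart ∧
    ∀ z : Fin 4 → ℂ, fderiv ℝ morseChart z = 0 ↔ z = 0 := by
  refine ⟨differentiable_morseChart, fun z => ⟨fun hz => ?_, ?_⟩⟩
  · by_contra hne
    have hcrit : HasLineDerivAt ℝ morseChart 0 z (torusField z) := by
      simpa [hz] using (differentiable_morseChart z).hasFDerivAt.hasLineDerivAt (torusField z)
    have hpos : 0 < 2 * morseVariance z / morseDen z ^ 2 := by
      have := morseVariance_pos hne
      have := morseDen_pos z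
      positivity
    exact hpos.ne' ((hasLineDerivAt_morseChart_torusField z).unique hcrit)
  · rintro rfl
    exact isLocalMin_morseChart_zero.fderiv_eq_zero
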